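/- For the A_{n+2} hyperplane arrangement D = Σ_{i<j} H_{i,j} in ℂP^n (with H_{i,j} = {z_i = z_j} on {Σ_{i=0}^{n+1} z_i = 0}), the number of hyperplanes is ℓ = (n+1)(n+2)/2 and the quantity m(D) = min over nonempty subsets I of pairs with ∩_{(i,j)∈I} H_{i,j} ≠ ∅ of codim(∩_{(i,j)∈I} H_{i,j}) / #I satisfies ℓ · m(D) = n + 2 > n + 1. -/

import Mathlib

/-!
For `I` a set of pairs, `⋂_{(i,j) ∈ I} {z_i = z_j}` is the space of functions constant on the
connected components of the graph with edge set `I`; inside `{Σ z = 0}` it therefore has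
dimension `c - 1`, where `c` is the number of components, so its projective codimension in
`ℂPⁿ` (with `N = n + 2` coordinates) is `N - c`. A component with `v` vertices carries at most
`v (v - 1) / 2` edges, and when `c ≥ 2` every component has `v ≤ N - 1`; summing,
`2 #I ≤ (N - 1)(N - c)`, which is `codim / #I ≥ 2 / (n + 1)`. Equality holds for the complete
graph on all vertices but one, i.e. for the hyperplanes through `[1 : ⋯ : 1 : -(n + 1)]`.
-/

open SimpleGraph Module Finset

namespace BraidArrangement

section Fibers

variable {α β : Type*} [Fintype α] [Fintype β] [DecidableEq β] {f : α → β}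

lemma card_fiber_le_card_sub_one (hf : f.Surjective) (hβ : 2 ≤ Fintype.card β) (b : β) :
    #{i | f i = b} ≤ Fintype.card α - 1 := by
  obtain ⟨b', hb'⟩ := Fintype.exists_ne_of_one_lt_card hβ b
  obtain ⟨i, rfl⟩ := hf b'
  have : #{i | f i = b} < #(univ : Finset α) :=
    card_lt_card (filter_ssubset.2 ⟨i, mem_univ _, hb'⟩)
  rw [card_univ] at this
  omega

lemma sum_card_fiber_sub_one (hf : f.Surjective) :
    ∑ b, (#{i | f i = b} - 1) = Fintype.card α - Fintype.card β := by
  have hpos : ∀ b, 1 ≤ #{i | f i = b} := fun b =>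
    card_pos.2 (by obtain ⟨i, rfl⟩ := hf b; exact ⟨i, by simp⟩)
  have hsum : ∑ b, #{i | f i = b} = Fintype.card α :=
    (card_eq_sum_card_fiberwise fun i _ => mem_univ (f i)).symm
  have : ∑ b, (#{i | f i = b} - 1) + Fintype.card β = Fintype.card α := by
    rw [← hsum, Fintype.card_eq_sum_ones, ← sum_add_distrib]
    exact sum_congr rfl fun b _ => Nat.sub_add_cancel (hpos b)
  omega

end Fibers

variable {α : Type*} [LinearOrder α]

def pairGraph (I : Finset {e : α × α // e.1 < e.2}) : SimpleGraph α :=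
  SimpleGraph.fromRel fun i j => ∃ h : i < j, ⟨(i, j), h⟩ ∈ I

variable {I : Finset {e : α × α // e.1 < e.2}}

lemma pairGraph_adj_of_mem {e : {e : α × α // e.1 < e.2}} (he : e ∈ I) :
    (pairGraph I).Adj e.1.1 e.1.2 :=
  (fromRel_adj _ _ _).2 ⟨e.2.ne, .inl ⟨e.2, he⟩⟩

lemma connectedComponentMk_fst_eq_snd {e : {e : α × α // e.1 < e.2}} (he : e ∈ I) :
    (pairGraph I).connectedComponentMk e.1.1 = (pairGraph I).connectedComponentMk e.1.2 :=
  ConnectedComponent.sound (pairGraph_adj_of_mem he).reachable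

lemma eq_of_reachable {β : Type*} {x : α → β} (hx : ∀ e ∈ I, x e.1.1 = x e.1.2) {i j : α}
    (hij : (pairGraph I).Reachable i j) : x i = x j := by
  obtain ⟨w⟩ := hij
  induction w with
  | nil => rfl
  | cons hadj _ ih =>
    obtain ⟨-, ⟨h, he⟩ | ⟨h, he⟩⟩ := (fromRel_adj _ _ _).1 hadj
    · exact (hx _ he).trans ih
    · exact (hx _ he).symm.trans ih

variable (K : Type*) [Field K]

noncomputable def hyperplane (e : {e : α × α // e.1 < e.2}) : Submodule K (α → K) :=
  LinearMap.ker ((LinearMap.proj e.1.1 : (α → K) →ₗ[K] K) - LinearMap.proj e.1.2)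

noncomputable def flat [Fintype α] (I : Finset {e : α × α // e.1 < e.2}) :
    Submodule K (α → K) :=
  (⨅ e ∈ I, hyperplane K e) ⊓ LinearMap.ker (∑ i : α, (LinearMap.proj i : (α → K) →ₗ[K] K))

variable {K}

lemma mem_iInf_hyperplane {x : α → K} :
    x ∈ ⨅ e ∈ I, hyperplane K e ↔ ∀ e ∈ I, x e.1.1 = x e.1.2 := by
  simp only [Submodule.mem_iInf, hyperplane, LinearMap.mem_ker, LinearMap.sub_apply,
    LinearMap.proj_apply, sub_eq_zero]

lemma range_funLeft_connectedComponentMk :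
    LinearMap.range (LinearMap.funLeft K K (pairGraph I).connectedComponentMk) =
      ⨅ e ∈ I, hyperplane K e := by
  apply le_antisymm
  · rintro _ ⟨g, rfl⟩
    rw [mem_iInf_hyperplane]
    intro e he
    simp [LinearMap.funLeft_apply, connectedComponentMk_fst_eq_snd he]
  · intro x hx
    refine ⟨fun C => x C.out, funext fun i => ?_⟩
    exact eq_of_reachable (mem_iInf_hyperplane.1 hx) (ConnectedComponent.exact (Quot.out_eq _))

lemma finrank_iInf_hyperplane [Fintype α] :
    finrank K ↥(⨅ e ∈ I, hyperplane K e) = Nat.card (pairGraph I).ConnectedComponent := by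
  classical
  have hinj : Function.Injective (LinearMap.funLeft K K (pairGraph I).connectedComponentMk) :=
    LinearMap.funLeft_injective_of_surjective K K _ Quot.mk_surjective
  rw [← range_funLeft_connectedComponentMk, LinearMap.finrank_range_of_inj hinj,
    finrank_fintype_fun_eq_card, Nat.card_eq_fintype_card]

lemma finrank_flat_add_one [Fintype α] [Nonempty α] [CharZero K] :
    finrank K ↥(flat K I) + 1 = Nat.card (pairGraph I).ConnectedComponent := by
  set P := ⨅ e ∈ I, hyperplane K e
  set σ : (α → K) →ₗ[K] K := ∑ i : α, LinearMap.proj i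
  have hσ : σ.domRestrict P ≠ 0 := by
    have hone : (1 : α → K) ∈ P := mem_iInf_hyperplane.2 fun _ _ => rfl
    refine fun h => ?_
    have := LinearMap.congr_fun h ⟨1, hone⟩
    simp [σ] at this
  rw [← finrank_iInf_hyperplane (K := K), ← Dual.finrank_ker_add_one_of_ne_zero hσ,
    LinearMap.ker_domRestrict, flat]
  have : (LinearMap.ker σ).comap P.subtype = (P ⊓ LinearMap.ker σ).comap P.subtype := by
    rw [Submodule.comap_inf, Submodule.comap_subtype_self, top_inf_eq]
  rw [this, (Submodule.comapSubtypeEquivOfLe inf_le_left).finrank_eq]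

section Counting

variable [Fintype α] {β : Type*} [DecidableEq β] {f : α → β}

lemma two_mul_card_filter_le (hf : ∀ e ∈ I, f e.1.1 = f e.1.2) (b : β) :
    2 * #{e ∈ I | f e.1.1 = b} ≤ #{i | f i = b} * (#{i | f i = b} - 1) := by
  set s : Finset α := {i | f i = b}
  have hle : #{e ∈ I | f e.1.1 = b} ≤ #{x ∈ s ×ˢ s | x.1 < x.2} := by
    refine card_le_card_of_injOn (fun e => e.1) (fun e he => ?_) fun _ _ _ _ h => Subtype.ext h
    simp only [coe_filter, Set.mem_ofPred_eq] at he
    simp [s, he.2, ← hf e he.1, e.2]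
  rw [card_product_filter_lt, Nat.choose_two_right] at hle
  have := Nat.two_mul_div_two_of_even (Nat.even_mul_pred_self #s)
  omega

theorem two_mul_card_le [Fintype β] (hf : ∀ e ∈ I, f e.1.1 = f e.1.2) (hsurj : f.Surjective)
    (hβ : 2 ≤ Fintype.card β) :
    2 * #I ≤ (Fintype.card α - 1) * (Fintype.card α - Fintype.card β) :=
  calc 2 * #I = ∑ b, 2 * #{e ∈ I | f e.1.1 = b} := by
        rw [← mul_sum, card_eq_sum_card_fiberwise fun e _ => mem_univ (f e.1.1)]
    _ ≤ ∑ b, (Fintype.card α - 1) * (#{i | f i = b} - 1) := by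
        refine sum_le_sum fun b _ => ?_
        exact (two_mul_card_filter_le hf b).trans
          (Nat.mul_le_mul_right _ (card_fiber_le_card_sub_one hsurj hβ b))
    _ = (Fintype.card α - 1) * (Fintype.card α - Fintype.card β) := by
        rw [← mul_sum, sum_card_fiber_sub_one hsurj]

end Counting

theorem two_div_le_codim_div_card [Fintype α] [CharZero K] (hI : I.Nonempty)
    (hd : 1 ≤ finrank K ↥(flat K I)) :
    2 / ((Fintype.card α : ℚ) - 1) ≤
      ((Fintype.card α : ℚ) - 1 - finrank K ↥(flat K I)) / #I := by
  classical
  obtain ⟨e, he⟩ := hI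
  have : Nonempty α := ⟨e.1.1⟩
  have hc : finrank K ↥(flat K I) + 1 = Fintype.card (pairGraph I).ConnectedComponent := by
    rw [← Nat.card_eq_fintype_card, finrank_flat_add_one]
  have hcα : Fintype.card (pairGraph I).ConnectedComponent ≤ Fintype.card α :=
    Fintype.card_le_of_surjective _ Quot.mk_surjective
  have hbound := two_mul_card_le (fun e he => connectedComponentMk_fst_eq_snd he)
    Quot.mk_surjective (by omega : 2 ≤ Fintype.card (pairGraph I).ConnectedComponent)
  rw [← hc] at hbound hcα
  have hboundQ := (Nat.cast_le (α := ℚ)).2 hbound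
  push_cast [Nat.cast_sub hcα, Nat.cast_sub (by omega : 1 ≤ Fintype.card α)] at hboundQ
  have hN : (2 : ℚ) ≤ Fintype.card α := by exact_mod_cast (by omega : 2 ≤ Fintype.card α)
  have hIpos : (0 : ℚ) < #I := by exact_mod_cast card_pos.2 ⟨e, he⟩
  rw [div_le_div_iff₀ (by linarith) hIpos]
  linarith

section Avoiding

variable [Fintype α] (a : α)

lemma card_filter_fst_ne_and_snd_ne :
    #({e | e.1.1 ≠ a ∧ e.1.2 ≠ a} : Finset {e : α × α // e.1 < e.2}) =
      (Fintype.card α - 1).choose 2 := by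
  rw [← card_univ, ← card_erase_of_mem (mem_univ a), ← card_product_filter_lt]
  refine card_nbij (fun e => e.1) (fun e he => ?_) (fun _ _ _ _ h => Subtype.ext h) fun x hx => ?_
  · simp only [coe_filter, Set.mem_ofPred_eq, mem_univ, true_and] at he
    simp [he.1, he.2, e.2]
  · simp only [coe_filter, mem_product, mem_erase, mem_univ, and_true, Set.mem_ofPred_eq] at hx
    exact ⟨⟨x, hx.2⟩, by simpa using hx.1, rfl⟩

lemma one_le_finrank_flat_filter_fst_ne_and_snd_ne [CharZero K] {b : α} (hba : b ≠ a) :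
    1 ≤ finrank K ↥(flat K ({e | e.1.1 ≠ a ∧ e.1.2 ≠ a} : Finset {e : α × α // e.1 < e.2})) := by
  -- the point `[1 : ⋯ : 1 : 1 - N]`, with `1 - N` in coordinate `a`
  set x : α → K := 1 - (Fintype.card α : K) • Pi.single a 1
  have hx : x ∈ flat K ({e | e.1.1 ≠ a ∧ e.1.2 ≠ a} : Finset {e : α × α // e.1 < e.2}) := by
    refine ⟨mem_iInf_hyperplane.2 fun e he => ?_, ?_⟩
    · simp only [mem_filter, mem_univ, true_and] at he
      simp [x, he.1, he.2]
    · simp [x, sum_sub_distrib, ← mul_sum]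
  refine Nat.one_le_iff_ne_zero.2 (finrank_pos_iff_exists_ne_zero.2 ⟨⟨x, hx⟩, fun h => ?_⟩).ne'
  have := congr_fun (congr_arg Subtype.val h) b
  simp [x, hba] at this

theorem finrank_flat_filter_fst_ne_and_snd_ne [CharZero K] (hα : 3 ≤ Fintype.card α) :
    finrank K ↥(flat K ({e | e.1.1 ≠ a ∧ e.1.2 ≠ a} : Finset {e : α × α // e.1 < e.2})) = 1 := by
  set J : Finset {e : α × α // e.1 < e.2} := {e | e.1.1 ≠ a ∧ e.1.2 ≠ a}
  obtain ⟨b, hba⟩ := Fintype.exists_ne_of_one_lt_card (by omega) a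
  have hd := one_le_finrank_flat_filter_fst_ne_and_snd_ne (K := K) a hba
  have hJ : (#J : ℚ) = (Fintype.card α - 1) * (Fintype.card α - 2) / 2 := by
    rw [card_filter_fst_ne_and_snd_ne, Nat.cast_choose_two, Nat.cast_sub (by omega)]
    ring
  have hJne : J.Nonempty := card_pos.1 (by
    rw [card_filter_fst_ne_and_snd_ne]; exact Nat.choose_pos (by omega))
  have hbound := two_div_le_codim_div_card hJne hd
  have hN : (3 : ℚ) ≤ Fintype.card α := by exact_mod_cast hα
  rw [hJ, div_le_div_iff₀ (by linarith) (by nlinarith)] at hbound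
  have : (finrank K ↥(flat K J) : ℚ) ≤ 1 := by nlinarith
  exact_mod_cast le_antisymm (by exact_mod_cast this) hd

end Avoiding

end BraidArrangement

/-- The A_{n+2} braid arrangement in ℂPⁿ = {Σ z = 0} ⊂ ℂP^{n+1}: the number of
hyperplanes `H_{i,j} = {z_i = z_j}` is `ℓ = (n+1)(n+2)/2`, the quantity
`m(D) = min codim(∩_{e∈I} H_e)/#I` (over index sets with nonempty projective
intersection, codim taken in ℂPⁿ) equals `2/(n+1)`, and `ℓ·m(D) = n+2 > n+1`. -/
theorem stmt_6 (n : ℕ) (hn : 1 ≤ n) :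
    let E := {e : Fin (n + 2) × Fin (n + 2) // e.1 < e.2}
    let Heq : E → Submodule ℂ (Fin (n + 2) → ℂ) := fun e =>
      LinearMap.ker ((LinearMap.proj e.1.1 : (Fin (n + 2) → ℂ) →ₗ[ℂ] ℂ) - LinearMap.proj e.1.2)
    let W : Submodule ℂ (Fin (n + 2) → ℂ) :=
      LinearMap.ker (∑ i : Fin (n + 2), (LinearMap.proj i : (Fin (n + 2) → ℂ) →ₗ[ℂ] ℂ))
    let S : Finset E → Submodule ℂ (Fin (n + 2) → ℂ) := fun I => (⨅ e ∈ I, Heq e) ⊓ W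
    Fintype.card E = (n + 1) * (n + 2) / 2 ∧
    (∀ I : Finset E, I.Nonempty → 1 ≤ Module.finrank ℂ ↥(S I) →
      (2 : ℚ) / ((n : ℚ) + 1) ≤ ((n : ℚ) + 1 - Module.finrank ℂ ↥(S I)) / I.card) ∧
    (∃ I : Finset E, I.Nonempty ∧ 1 ≤ Module.finrank ℂ ↥(S I) ∧
      ((n : ℚ) + 1 - Module.finrank ℂ ↥(S I)) / I.card = (2 : ℚ) / ((n : ℚ) + 1)) ∧
    (((n : ℚ) + 1) * ((n : ℚ) + 2) / 2) * ((2 : ℚ) / ((n : ℚ) + 1)) = (n : ℚ) + 2 ∧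
    (n : ℚ) + 1 < (n : ℚ) + 2 := by
  intro E Heq W S
  have hcodim (I : Finset E) (hI : I.Nonempty) (hd : 1 ≤ Module.finrank ℂ ↥(S I)) :
      (2 : ℚ) / ((n : ℚ) + 1) ≤ ((n : ℚ) + 1 - Module.finrank ℂ ↥(S I)) / I.card := by
    have hN : ((Fintype.card (Fin (n + 2)) : ℕ) : ℚ) - 1 = n + 1 := by
      rw [Fintype.card_fin]; push_cast; ring
    have h := BraidArrangement.two_div_le_codim_div_card (K := ℂ) hI hd
    rw [hN] at h
    exact h
  set J : Finset E := {e | e.1.1 ≠ Fin.last (n + 1) ∧ e.1.2 ≠ Fin.last (n + 1)}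
  have hJ : Module.finrank ℂ ↥(S J) = 1 :=
    BraidArrangement.finrank_flat_filter_fst_ne_and_snd_ne _ (by rw [Fintype.card_fin]; omega)
  have hJcard : (J.card : ℚ) = (n + 1) * n / 2 := by
    rw [BraidArrangement.card_filter_fst_ne_and_snd_ne, Nat.cast_choose_two]
    simp
  refine ⟨?_, hcodim, ⟨J, ?_, hJ.ge, ?_⟩, by field_simp, by linarith⟩
  · rw [Fintype.card_subtype, Fintype.card_product_filter_lt, Fintype.card_fin,
      Nat.choose_two_right, mul_comm]
    rfl
  · exact card_pos.1 (by exact_mod_cast (by rw [hJcard]; positivity : (0 : ℚ) < J.card))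
  · rw [hJ, hJcard]
    field_simp
    ring
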